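/- arXiv:1906.09784 — 2 statements merged into one kernel-verified Lean document; each statement's English description precedes it below -/
import Mathlib

section
/- Bellman residual recursion bound (error-free case): in the conservative scheme π_{k+1} = (1-α_{k+1}) π_k + α_{k+1} π'_{k+1} with π'_{k+1} greedy w.r.t. v_k and v_k = T_{π_k}^m v_{k-1}, the residual b_k = v_k - T_{π_{k+1}} v_k satisfies b_k ≤ (γ P_{π_k})^m b_{k-1} componentwise. -/
open Finset

/-- A (stochastic) policy: for each state, a probability distribution over actions. -/
def IsPolicy {S A : Type*} [Fintype A] (π : S → A → ℝ) : Prop :=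
  (∀ s a, 0 ≤ π s a) ∧ ∀ s, ∑ a, π s a = 1

/-- A Markov transition kernel: for each state-action pair, a distribution over next states. -/
def IsKernel {S A : Type*} [Fintype S] (P : S → A → S → ℝ) : Prop :=
  (∀ s a s', 0 ≤ P s a s') ∧ ∀ s a, ∑ s', P s a s' = 1

/-- One-step state-action evaluation: q(s,a) = r(s,a) + γ E_{s'}[v(s')]. -/
noncomputable def qOf {S A : Type*} [Fintype S] (r : S → A → ℝ) (P : S → A → S → ℝ)
    (γ : ℝ) (v : S → ℝ) (s : S) (a : A) : ℝ :=
  r s a + γ * ∑ s', P s a s' * v s'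

/-- Bellman evaluation operator T_π. -/
noncomputable def Tpol {S A : Type*} [Fintype S] [DecidableEq S] [Fintype A] (r : S → A → ℝ)
    (P : S → A → S → ℝ) (γ : ℝ) (π : S → A → ℝ) (v : S → ℝ) (s : S) : ℝ :=
  ∑ a, π s a * qOf r P γ v s a

/-- Bellman optimality operator T_*. -/
noncomputable def Tstar {S A : Type*} [Fintype S] [DecidableEq S] [Fintype A] [Nonempty A]
    (r : S → A → ℝ) (P : S → A → S → ℝ) (γ : ℝ) (v : S → ℝ) (s : S) : ℝ :=
  Finset.univ.sup' Finset.univ_nonempty (fun a => qOf r P γ v s a)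

/-- Transition matrix P_π of a policy. -/
noncomputable def Ppol {S A : Type*} [Fintype A] (P : S → A → S → ℝ)
    (π : S → A → ℝ) : Matrix S S ℝ :=
  fun s s' => ∑ a, π s a * P s a s'

/-- Expected reward r_π of a policy. -/
noncomputable def rpol {S A : Type*} [Fintype A] (r : S → A → ℝ)
    (π : S → A → ℝ) (s : S) : ℝ :=
  ∑ a, π s a * r s a

lemma Tpol_sub {S A : Type*} [Fintype S] [DecidableEq S] [Fintype A] (r : S → A → ℝ)
    (P : S → A → S → ℝ) (γ : ℝ) (π : S → A → ℝ) (u w : S → ℝ) :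
    Tpol r P γ π u - Tpol r P γ π w = (γ • Ppol P π).mulVec (u - w) := by
  funext s
  simp only [Pi.sub_apply, Tpol, qOf, Matrix.mulVec, Matrix.smul_apply, Ppol,
    dotProduct, Pi.smul_apply, smul_eq_mul]
  rw [← Finset.sum_sub_distrib]
  have : ∀ a : A, π s a * (r s a + γ * ∑ s', P s a s' * u s')
      - π s a * (r s a + γ * ∑ s', P s a s' * w s')
      = ∑ s', γ * (π s a * P s a s') * (u s' - w s') := by
    intro a
    have h1 : π s a * (r s a + γ * ∑ s', P s a s' * u s')
        - π s a * (r s a + γ * ∑ s', P s a s' * w s')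
        = γ * π s a * ((∑ s', P s a s' * u s') - ∑ s', P s a s' * w s') := by ring
    rw [h1, ← Finset.sum_sub_distrib, Finset.mul_sum]
    apply Finset.sum_congr rfl
    intro s' _
    ring
  rw [Finset.sum_congr rfl (fun a _ => this a), Finset.sum_comm]
  apply Finset.sum_congr rfl
  intro s' _
  rw [Finset.mul_sum, Finset.sum_mul]

lemma Tpol_iter_sub {S A : Type*} [Fintype S] [DecidableEq S] [Fintype A] (r : S → A → ℝ)
    (P : S → A → S → ℝ) (γ : ℝ) (π : S → A → ℝ) (u w : S → ℝ) (m : ℕ) :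
    (Tpol r P γ π)^[m] u - (Tpol r P γ π)^[m] w = ((γ • Ppol P π) ^ m).mulVec (u - w) := by
  induction m generalizing u w with
  | zero => simp [Matrix.one_mulVec]
  | succ n ih =>
      rw [Function.iterate_succ_apply, Function.iterate_succ_apply, ih,
        Tpol_sub, pow_succ, Matrix.mulVec_mulVec]

theorem residual_recursion_bound {S A : Type*} [Fintype S] [DecidableEq S] [Fintype A] [Nonempty A]
    (r : S → A → ℝ) (P : S → A → S → ℝ) (hP : IsKernel P)
    (γ : ℝ) (hγ : γ ∈ Set.Ioo (0:ℝ) 1)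
    (πk π' : S → A → ℝ) (hπk : IsPolicy πk) (hπ' : IsPolicy π')
    (m : ℕ) (α : ℝ) (hα : α ∈ Set.Icc (0:ℝ) 1)
    (vprev vk : S → ℝ) (hvk : vk = (Tpol r P γ πk)^[m] vprev)
    (hgreedy : ∀ s, Tpol r P γ π' vk s = Tstar r P γ vk s)
    (πk1 : S → A → ℝ) (hmix : πk1 = fun s a => (1 - α) * πk s a + α * π' s a) :
    ∀ s, (vk - Tpol r P γ πk1 vk) s ≤
      (((γ • Ppol P πk) ^ m).mulVec (vprev - Tpol r P γ πk vprev)) s := by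
  intro s
  -- Step 1: T_{πk} vk ≤ T_{πk1} vk pointwise
  have hTstar : Tpol r P γ πk vk s ≤ Tstar r P γ vk s := by
    have : Tpol r P γ πk vk s ≤ ∑ a, πk s a * Tstar r P γ vk s := by
      apply Finset.sum_le_sum
      intro a _
      exact mul_le_mul_of_nonneg_left
        (Finset.le_sup' (fun a => qOf r P γ vk s a) (Finset.mem_univ a)) (hπk.1 s a)
    simpa [← Finset.sum_mul, hπk.2 s] using this
  have hmono : Tpol r P γ πk vk s ≤ Tpol r P γ πk1 vk s := by
    have hsplit : Tpol r P γ πk1 vk s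
        = (1 - α) * Tpol r P γ πk vk s + α * Tpol r P γ π' vk s := by
      simp only [Tpol, hmix, Finset.mul_sum, ← Finset.sum_add_distrib]
      apply Finset.sum_congr rfl; intro a _; ring
    rw [hsplit, hgreedy s]
    nlinarith [hα.1, hα.2, hTstar]
  have key : vk - Tpol r P γ πk vk
      = ((γ • Ppol P πk) ^ m).mulVec (vprev - Tpol r P γ πk vprev) := by
    have : Tpol r P γ πk vk = (Tpol r P γ πk)^[m] (Tpol r P γ πk vprev) := by
      rw [hvk]
      exact (Function.iterate_succ_apply' _ m vprev).symm.trans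
        (Function.iterate_succ_apply _ m vprev)
    rw [this, hvk, Tpol_iter_sub]
  calc (vk - Tpol r P γ πk1 vk) s ≤ (vk - Tpol r P γ πk vk) s := by
        simp only [Pi.sub_apply]; linarith
    _ = (((γ • Ppol P πk) ^ m).mulVec (vprev - Tpol r P γ πk vprev)) s := by rw [key]
end

section
/- Distance recursion bound (error-free case): with d_k = v_* - T_{π_k}^m v_{k-1}, b_k = v_k - T_{π_{k+1}} v_k, in the conservative scheme with mixture rates α_k, one has d_{k+1} ≤ ((1-α_{k+1}) I + α_{k+1} γ P_{π_*}) d_k + ∑_{j=1}^{m-1} (γ P_{π_{k+1}})^j b_k + (1-α_{k+1}) (γ P_{π_k})^m b_{k-1}, componentwise. -/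
open Finset

/-!
Write `b_k = v_k - T_{π_{k+1}} v_k`. Since `T_π` is affine with linear part `γ P_π`, consecutive
iterates differ by `(γ P_π)^j` applied to the first difference, so telescoping gives
`v_* - v_{k+1} = (v_* - T_{π_{k+1}} v_k) + ∑_{j=1}^{m-1} (γ P_{π_{k+1}})^j b_k`. The mixture splits
`T_{π_{k+1}} v_k = (1-α) T_{π_k} v_k + α T_{π'} v_k`, where `v_k - T_{π_k} v_k = (γ P_{π_k})^m b_{k-1}`.
Greediness gives `T_{π'} v_k ≥ T_{π_*} v_k`, and `v_* - T_{π_*} v_k = γ P_{π_*} (v_* - v_k)`.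
-/

section BellmanOperator

variable {S A : Type*} [Fintype S] [DecidableEq S] [Fintype A]
variable (r : S → A → ℝ) (P : S → A → S → ℝ) (γ : ℝ)

theorem Tpol_apply (π : S → A → ℝ) (v : S → ℝ) (s : S) :
    Tpol r P γ π v s = rpol r π s + γ * (Ppol P π).mulVec v s := by
  simp only [Tpol, qOf, rpol, Matrix.mulVec, dotProduct, Ppol, mul_add, sum_add_distrib,
    mul_sum, sum_mul]
  rw [sum_comm (f := fun a s' => π s a * (γ * (P s a s' * v s')))]
  congr 1
  exact sum_congr rfl fun _ _ => sum_congr rfl fun _ _ => by ring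

theorem Tpol_sub_Tpol (π : S → A → ℝ) (v w : S → ℝ) :
    Tpol r P γ π v - Tpol r P γ π w = (γ • Ppol P π).mulVec (v - w) := by
  ext s
  simp only [Pi.sub_apply, Tpol_apply, Matrix.smul_mulVec, Matrix.mulVec_sub, Pi.smul_apply,
    smul_eq_mul]
  ring

theorem iterate_Tpol_sub_iterate_succ (π : S → A → ℝ) (v : S → ℝ) (n : ℕ) :
    (Tpol r P γ π)^[n] v - (Tpol r P γ π)^[n + 1] v
      = ((γ • Ppol P π) ^ n).mulVec (v - Tpol r P γ π v) := by
  induction n with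
  | zero => simp
  | succ n ih =>
    rw [Function.iterate_succ_apply', Function.iterate_succ_apply' _ (n + 1), Tpol_sub_Tpol, ih,
      Matrix.mulVec_mulVec, ← pow_succ']

theorem Tpol_sub_iterate_Tpol (π : S → A → ℝ) (v : S → ℝ) {n : ℕ} (hn : 1 ≤ n) :
    Tpol r P γ π v - (Tpol r P γ π)^[n] v
      = ∑ j ∈ Ico 1 n, ((γ • Ppol P π) ^ j).mulVec (v - Tpol r P γ π v) := by
  have h := sum_Ico_sub (f := fun j => (Tpol r P γ π)^[j] v) hn
  rw [Function.iterate_one] at h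
  rw [← neg_sub, ← h, ← sum_neg_distrib]
  exact sum_congr rfl fun j _ => by rw [neg_sub, iterate_Tpol_sub_iterate_succ]

theorem Tpol_mix (π₁ π₂ : S → A → ℝ) (c₁ c₂ : ℝ) (v : S → ℝ) :
    Tpol r P γ (fun s a => c₁ * π₁ s a + c₂ * π₂ s a) v
      = c₁ • Tpol r P γ π₁ v + c₂ • Tpol r P γ π₂ v := by
  ext s
  simp only [Tpol, Pi.add_apply, Pi.smul_apply, smul_eq_mul, mul_sum, add_mul, sum_add_distrib,
    mul_assoc]

theorem Tpol_le_Tstar [Nonempty A] {π : S → A → ℝ} (hπ : IsPolicy π) (v : S → ℝ) :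
    Tpol r P γ π v ≤ Tstar r P γ v := fun s =>
  calc Tpol r P γ π v s
      ≤ ∑ a, π s a * Tstar r P γ v s :=
        sum_le_sum fun a _ => mul_le_mul_of_nonneg_left (le_sup' _ (mem_univ a)) (hπ.1 s a)
    _ = Tstar r P γ v s := by rw [← sum_mul, hπ.2 s, one_mul]

end BellmanOperator

theorem distance_recursion_bound_general {S A : Type*} [Fintype S] [DecidableEq S] [Fintype A] [Nonempty A]
    (r : S → A → ℝ) (P : S → A → S → ℝ)
    (γ : ℝ)
    (πstar : S → A → ℝ) (hπstar : IsPolicy πstar)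
    (vstar : S → ℝ) (hstarfix : Tpol r P γ πstar vstar = vstar)
    (πk π' πk1 : S → A → ℝ)
    (m : ℕ) (hm : 1 ≤ m) (α : ℝ) (hα : α ∈ Set.Icc (0:ℝ) 1)
    (vprev vk vk1 : S → ℝ)
    (hvk : vk = (Tpol r P γ πk)^[m] vprev)
    (hvk1 : vk1 = (Tpol r P γ πk1)^[m] vk)
    (hgreedy : ∀ s, Tpol r P γ π' vk s = Tstar r P γ vk s)
    (hmix : πk1 = fun s a => (1 - α) * πk s a + α * π' s a) :
    ∀ s, (vstar - vk1) s ≤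
      ((1 - α) • (vstar - vk) + α • (γ • Ppol P πstar).mulVec (vstar - vk)
        + ∑ j ∈ Finset.Ico 1 m, ((γ • Ppol P πk1) ^ j).mulVec (vk - Tpol r P γ πk1 vk)
        + (1 - α) • ((γ • Ppol P πk) ^ m).mulVec (vprev - Tpol r P γ πk vprev)) s := by
  have hb : vk - Tpol r P γ πk vk
      = ((γ • Ppol P πk) ^ m).mulVec (vprev - Tpol r P γ πk vprev) := by
    rw [hvk, ← Function.iterate_succ_apply' (Tpol r P γ πk), iterate_Tpol_sub_iterate_succ]
  have hstar : vstar - Tpol r P γ πstar vk = (γ • Ppol P πstar).mulVec (vstar - vk) := by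
    conv_lhs => rw [← hstarfix]
    exact Tpol_sub_Tpol r P γ πstar vstar vk
  have hgain : Tpol r P γ πstar vk ≤ Tpol r P γ π' vk := fun s =>
    (Tpol_le_Tstar r P γ hπstar vk s).trans_eq (hgreedy s).symm
  have hsplit : (1 - α) • (vstar - vk) + α • (γ • Ppol P πstar).mulVec (vstar - vk)
        + ∑ j ∈ Ico 1 m, ((γ • Ppol P πk1) ^ j).mulVec (vk - Tpol r P γ πk1 vk)
        + (1 - α) • ((γ • Ppol P πk) ^ m).mulVec (vprev - Tpol r P γ πk vprev)
      = (vstar - vk1) + α • (Tpol r P γ π' vk - Tpol r P γ πstar vk) := by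
    rw [← Tpol_sub_iterate_Tpol r P γ πk1 vk hm, ← hvk1, ← hb, ← hstar, hmix, Tpol_mix]
    module
  rw [hsplit]
  exact le_add_of_nonneg_right (smul_nonneg hα.1 (sub_nonneg.2 hgain))

theorem distance_recursion_bound {S A : Type*} [Fintype S] [DecidableEq S] [Fintype A] [Nonempty A]
    (r : S → A → ℝ) (P : S → A → S → ℝ) (hP : IsKernel P)
    (γ : ℝ) (hγ : γ ∈ Set.Ioo (0:ℝ) 1)
    (πstar : S → A → ℝ) (hπstar : IsPolicy πstar)
    (vstar : S → ℝ) (hstarfix : Tpol r P γ πstar vstar = vstar)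
    (hopt : ∀ s, Tstar r P γ vstar s = vstar s)
    (πk π' πk1 : S → A → ℝ) (hπk : IsPolicy πk) (hπ' : IsPolicy π')
    (m : ℕ) (hm : 1 ≤ m) (α : ℝ) (hα : α ∈ Set.Icc (0:ℝ) 1)
    (vprev vk vk1 : S → ℝ)
    (hvk : vk = (Tpol r P γ πk)^[m] vprev)
    (hvk1 : vk1 = (Tpol r P γ πk1)^[m] vk)
    (hgreedy : ∀ s, Tpol r P γ π' vk s = Tstar r P γ vk s)
    (hmix : πk1 = fun s a => (1 - α) * πk s a + α * π' s a) :
    ∀ s, (vstar - vk1) s ≤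
      ((1 - α) • (vstar - vk) + α • (γ • Ppol P πstar).mulVec (vstar - vk)
        + ∑ j ∈ Finset.Ico 1 m, ((γ • Ppol P πk1) ^ j).mulVec (vk - Tpol r P γ πk1 vk)
        + (1 - α) • ((γ • Ppol P πk) ^ m).mulVec (vprev - Tpol r P γ πk vprev)) s :=
  distance_recursion_bound_general r P γ πstar hπstar vstar hstarfix πk π' πk1 m hm α hα vprev vk
    vk1 hvk hvk1 hgreedy hmix
end
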